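/- Let v be a semiconcave function on an open set Ω ⊂ ℝⁿ and suppose the directional derivative formula min_{p ∈ D⁺v(x₀)} ⟨p, θ⟩ = lim_{h→0⁺} (v(x₀ + hθ) - v(x₀))/h holds. If x : [0,τ] → Ω is a Lipschitz arc with right derivative ẋ⁺(s) = A(x(s))p(s) for all s, where p(s) ∈ D⁺v(x(s)) minimizes q ↦ ⟨A(x(s))q, q⟩ over D⁺v(x(s)), A(·) symmetric positive definite and continuous, and p(s) ≠ 0 for all s ∈ [0,τ], then v(x(s₁)) < v(x(s₂)) for all 0 ≤ s₁ < s₂ ≤ τ. -/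

import Mathlib

/-!
Fix `s` and put `θ = A (γ s) (p s)`. The superdifferential is convex, so the first-order condition
for the minimality of `p s` gives `⟪q, θ⟫ ≥ ⟪θ, p s⟫ > 0` for every `q ∈ D⁺v(γ s)`: the
directional derivative of `v` at `γ s` in direction `θ` is positive. Semiconcavity makes
`v - C/2 ‖·‖²` concave on balls inside `Ω`, so `v` is locally Lipschitz; hence the right derivative
of `v ∘ γ` at `s` is that directional derivative, and `v ∘ γ` increases strictly just to the right
of every `s`. A continuous function with this property is strictly increasing.
-/

open RealInnerProductSpace
open Set Filter

/-- The (Dini) superdifferential of `v` at `x`, relative to `Ω`. -/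
def superdiffOn {n : ℕ} (v : EuclideanSpace ℝ (Fin n) → ℝ) (Ω : Set (EuclideanSpace ℝ (Fin n)))
    (x : EuclideanSpace ℝ (Fin n)) : Set (EuclideanSpace ℝ (Fin n)) :=
  {p | ∀ ε > 0, ∃ δ > 0, ∀ y ∈ Ω, ‖y - x‖ < δ → v y - v x - ⟪p, y - x⟫ ≤ ε * ‖y - x‖}

open scoped Topology

section
variable {E : Type*} [NormedAddCommGroup E] [InnerProductSpace ℝ E]

lemma inner_apply_self_le_of_isMinOn {K : Set E} (hK : Convex ℝ K) {A : E →L[ℝ] E}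
    (hA : ∀ x y, ⟪A x, y⟫ = ⟪x, A y⟫) {p q : E} (hp : p ∈ K)
    (hmin : IsMinOn (fun q ↦ ⟪A q, q⟫) K p) (hq : q ∈ K) : ⟪A p, p⟫ ≤ ⟪A p, q⟫ := by
  have hderiv := (A.hasFDerivAt (x := p)).inner ℝ (hasFDerivAt_id p)
  have := hmin.localize.hasFDerivWithinAt_nonneg hderiv.hasFDerivWithinAt
    (sub_mem_posTangentConeAt_of_segment_subset (hK.segment_subset hp hq))
  simp only [ContinuousLinearMap.coe_comp, Function.comp_apply, ContinuousLinearMap.prod_apply,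
    ContinuousLinearMap.coe_id', id_eq, fderivInnerCLM_apply, map_sub] at this
  rw [hA q p, real_inner_comm (A p) q] at this
  linarith

lemma concaveOn_of_forall_le_inner {s : Set E} (hs : Convex ℝ s) {f : E → ℝ}
    (hf : ∀ z ∈ s, ∃ g, ∀ y ∈ s, f y ≤ f z + ⟪g, y - z⟫) : ConcaveOn ℝ s f := by
  refine ⟨hs, fun x hx y hy a b ha hb hab ↦ ?_⟩
  obtain ⟨g, hg⟩ := hf _ (hs hx hy ha hb hab)
  have h1 := hg x hx
  have h2 := hg y hy
  have hzero : a * ⟪g, x - (a • x + b • y)⟫ + b * ⟪g, y - (a • x + b • y)⟫ = 0 := by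
    simp only [inner_sub_right, inner_add_right, real_inner_smul_right]
    linear_combination (-(a * ⟪g, x⟫ + b * ⟪g, y⟫)) * hab
  have := add_le_add (mul_le_mul_of_nonneg_left h1 ha) (mul_le_mul_of_nonneg_left h2 hb)
  simp only [smul_eq_mul]
  linear_combination this + hzero + f (a • x + b • y) * hab

lemma locallyLipschitzOn_of_le_add_inner_add_sq [FiniteDimensional ℝ E] {Ω : Set E}
    (hΩ : IsOpen Ω) {v : E → ℝ} {C : ℝ}
    (hv : ∀ z ∈ Ω, ∃ q, ∀ y ∈ Ω, v y ≤ v z + ⟪q, y - z⟫ + C / 2 * ‖y - z‖ ^ 2) :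
    LocallyLipschitzOn Ω v := by
  intro x hx
  obtain ⟨r, hr, hball⟩ := Metric.isOpen_iff.mp hΩ x hx
  have hconc : ConcaveOn ℝ (Metric.ball x r) fun y ↦ v y - C / 2 * ‖y‖ ^ 2 := by
    refine concaveOn_of_forall_le_inner (convex_ball x r) fun z hz ↦ ?_
    obtain ⟨q, hq⟩ := hv z (hball hz)
    refine ⟨q - C • z, fun y hy ↦ ?_⟩
    have hsq : ‖y - z‖ ^ 2 = ‖y‖ ^ 2 - ‖z‖ ^ 2 - 2 * ⟪z, y - z⟫ := by
      rw [norm_sub_sq_real, inner_sub_right, real_inner_self_eq_norm_sq, real_inner_comm]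
      ring
    rw [inner_sub_left, real_inner_smul_left]
    linear_combination hq y (hball hy) + C / 2 * hsq
  have hquad : LocallyLipschitz fun y : E ↦ C / 2 * ‖y‖ ^ 2 :=
    (contDiff_const.mul (contDiff_norm_sq ℝ)).locallyLipschitz
  obtain ⟨K, t, ht, hK⟩ := (hconc.locallyLipschitzOn Metric.isOpen_ball).add
    hquad.locallyLipschitzOn (Metric.mem_ball_self hr)
  rw [nhdsWithin_eq_nhds.mpr (Metric.isOpen_ball.mem_nhds (Metric.mem_ball_self hr))] at ht
  exact ⟨K, t, mem_nhdsWithin_of_mem_nhds ht, by simpa using hK⟩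

lemma tendsto_slope_comp_of_lipschitzOnWith {f : E → ℝ} {γ : ℝ → E} {s m : ℝ} {θ : E}
    {K : NNReal} {U : Set E} (hU : U ∈ 𝓝 (γ s)) (hf : LipschitzOnWith K f U)
    (hγ : HasDerivWithinAt γ θ (Ici s) s)
    (hray : Tendsto (fun h ↦ (f (γ s + h • θ) - f (γ s)) / h) (𝓝[>] 0) (𝓝 m)) :
    Tendsto (slope (f ∘ γ) s) (𝓝[>] s) (𝓝 m) := by
  have hshift : Tendsto (fun t ↦ t - s) (𝓝[>] s) (𝓝[>] 0) :=
    tendsto_nhdsWithin_of_tendsto_nhds_of_eventually_within _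
      (((continuous_sub_right s).tendsto' s 0 (sub_self s)).mono_left nhdsWithin_le_nhds)
      (by filter_upwards [self_mem_nhdsWithin] with t (ht : s < t) using sub_pos.mpr ht)
  have hslope : Tendsto (fun t ↦ ‖slope γ s t - θ‖) (𝓝[>] s) (𝓝 0) := by
    rw [← tendsto_iff_norm_sub_tendsto_zero]
    exact (hasDerivWithinAt_iff_tendsto_slope' (lt_irrefl s)).mp hγ.Ioi_of_Ici
  have hcurve : ∀ᶠ t in 𝓝[>] s, γ t ∈ U :=
    (hγ.continuousWithinAt.mono Ioi_subset_Ici_self).eventually_mem hU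
  have hline : ∀ᶠ t in 𝓝[>] s, γ s + (t - s) • θ ∈ U :=
    (((by fun_prop : Continuous fun t : ℝ ↦ γ s + (t - s) • θ).tendsto' s (γ s) (by simp)).mono_left
      nhdsWithin_le_nhds).eventually_mem hU
  have herr : Tendsto (fun t ↦ (f (γ t) - f (γ s + (t - s) • θ)) / (t - s)) (𝓝[>] s) (𝓝 0) := by
    refine squeeze_zero_norm' ?_ (by simpa using hslope.const_mul (K : ℝ))
    filter_upwards [hcurve, hline, self_mem_nhdsWithin] with t hct hlt (hst : s < t)
    have hts : 0 < t - s := sub_pos.mpr hst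
    have hslope_eq : slope γ s t - θ = (t - s)⁻¹ • (γ t - (γ s + (t - s) • θ)) := by
      simp only [slope_def_module, smul_sub, smul_add, smul_smul, inv_mul_cancel₀ hts.ne', one_smul]
      abel
    calc ‖(f (γ t) - f (γ s + (t - s) • θ)) / (t - s)‖
        ≤ K * ‖γ t - (γ s + (t - s) • θ)‖ / (t - s) := by
          rw [norm_div, Real.norm_of_nonneg hts.le]
          gcongr
          exact hf.norm_sub_le hct hlt
      _ = K * ‖slope γ s t - θ‖ := by
          rw [hslope_eq, norm_smul, norm_inv, Real.norm_of_nonneg hts.le]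
          field_simp
  have hsum := (hray.comp hshift).add herr
  rw [add_zero] at hsum
  refine hsum.congr fun t ↦ ?_
  simp only [slope_def_field, Function.comp_apply]
  ring
end

lemma strictMonoOn_Icc_of_eventually_lt_right {f : ℝ → ℝ} {a b : ℝ}
    (hf : ContinuousOn f (Icc a b)) (h : ∀ x ∈ Ico a b, ∀ᶠ y in 𝓝[>] x, f x < f y) :
    StrictMonoOn f (Icc a b) := by
  have hmono : ∀ x ∈ Icc a b, ∀ y ∈ Icc a b, x ≤ y → f x ≤ f y := by
    intro x hx y hy hxy
    have hslope : ∀ z ∈ Ico x b, ∀ r : ℝ, 0 < r →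
        ∃ᶠ w in 𝓝[>] z, slope (fun t ↦ -f t) z w < r := by
      intro z hz r hr
      refine Eventually.frequently ?_
      filter_upwards [h z ⟨hx.1.trans hz.1, hz.2⟩, self_mem_nhdsWithin] with w hw (hzw : z < w)
      rw [slope_neg]
      linarith [(slope_pos_iff_of_le hzw.le).mpr hw]
    have := image_le_of_liminf_slope_right_le_deriv_boundary
      (hf.mono (Icc_subset_Icc_left hx.1)).neg (B := fun _ ↦ -f x) (B' := fun _ ↦ 0) le_rfl
      continuousOn_const (fun _ _ ↦ hasDerivWithinAt_const _ _ _) hslope ⟨hxy, hy.2⟩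
    exact neg_le_neg_iff.mp this
  intro x hx y hy hxy
  obtain ⟨z, hfz, hxz, hzy⟩ := ((h x ⟨hx.1, hxy.trans_le hy.2⟩).and (Ioo_mem_nhdsGT hxy)).exists
  exact hfz.trans_le (hmono z ⟨hx.1.trans hxz.le, hzy.le.trans hy.2⟩ y hy hzy.le)

lemma convex_superdiffOn {n : ℕ} (v : EuclideanSpace ℝ (Fin n) → ℝ)
    (Ω : Set (EuclideanSpace ℝ (Fin n))) (x : EuclideanSpace ℝ (Fin n)) :
    Convex ℝ (superdiffOn v Ω x) := by
  intro p₁ h₁ p₂ h₂ a b ha hb hab ε hε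
  obtain ⟨δ₁, hδ₁, H₁⟩ := h₁ ε hε
  obtain ⟨δ₂, hδ₂, H₂⟩ := h₂ ε hε
  refine ⟨min δ₁ δ₂, lt_min hδ₁ hδ₂, fun y hy hyx ↦ ?_⟩
  have := add_le_add (mul_le_mul_of_nonneg_left (H₁ y hy (hyx.trans_le (min_le_left _ _))) ha)
    (mul_le_mul_of_nonneg_left (H₂ y hy (hyx.trans_le (min_le_right _ _))) hb)
  rw [inner_add_left, real_inner_smul_left, real_inner_smul_left]
  linear_combination this - (v y - v x - ε * ‖y - x‖) * hab

theorem strict_increase_along_characteristic_general {n : ℕ}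
    (Ω : Set (EuclideanSpace ℝ (Fin n))) (hΩo : IsOpen Ω)
    (v : EuclideanSpace ℝ (Fin n) → ℝ) (C : ℝ)
    (hsc : ∀ z ∈ Ω, ∀ q ∈ superdiffOn v Ω z, ∀ y ∈ Ω,
      v y ≤ v z + ⟪q, y - z⟫ + C / 2 * ‖y - z‖ ^ 2)
    (hdir : ∀ x₀ ∈ Ω, ∀ θ : EuclideanSpace ℝ (Fin n), ∃ m : ℝ,
      IsLeast {r : ℝ | ∃ p ∈ superdiffOn v Ω x₀, r = ⟪p, θ⟫} m ∧
      Tendsto (fun h : ℝ => (v (x₀ + h • θ) - v x₀) / h) (nhdsWithin 0 (Ioi 0)) (nhds m))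
    (A : EuclideanSpace ℝ (Fin n) → EuclideanSpace ℝ (Fin n) →L[ℝ] EuclideanSpace ℝ (Fin n))
    (hAsymm : ∀ x p q, ⟪A x p, q⟫ = ⟪p, A x q⟫)
    (hApos : ∀ x p, p ≠ 0 → 0 < ⟪A x p, p⟫)
    (τ : ℝ)
    (γ : ℝ → EuclideanSpace ℝ (Fin n)) (L : NNReal)
    (hLip : LipschitzOnWith L γ (Icc 0 τ)) (hmaps : ∀ s ∈ Icc 0 τ, γ s ∈ Ω)
    (p : ℝ → EuclideanSpace ℝ (Fin n))
    (hpmem : ∀ s ∈ Icc 0 τ, p s ∈ superdiffOn v Ω (γ s))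
    (hpmin : ∀ s ∈ Icc 0 τ, ∀ q ∈ superdiffOn v Ω (γ s),
      ⟪A (γ s) (p s), p s⟫ ≤ ⟪A (γ s) q, q⟫)
    (hderiv : ∀ s ∈ Icc 0 τ, HasDerivWithinAt γ (A (γ s) (p s)) (Ici s) s)
    (hpne : ∀ s ∈ Icc 0 τ, p s ≠ 0) :
    ∀ s₁ ∈ Icc 0 τ, ∀ s₂ ∈ Icc 0 τ, s₁ < s₂ → v (γ s₁) < v (γ s₂) := by
  have hlip : LocallyLipschitzOn Ω v := by
    refine locallyLipschitzOn_of_le_add_inner_add_sq (C := C) hΩo fun z hz ↦ ?_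
    obtain ⟨-, ⟨⟨q, hq, -⟩, -⟩, -⟩ := hdir z hz 0
    exact ⟨q, hsc z hz q hq⟩
  refine strictMonoOn_Icc_of_eventually_lt_right
    (hlip.continuousOn.comp hLip.continuousOn hmaps) fun s hs ↦ ?_
  have hs' : s ∈ Icc 0 τ := Ico_subset_Icc_self hs
  obtain ⟨-, ⟨⟨q, hq, rfl⟩, -⟩, hray⟩ := hdir (γ s) (hmaps s hs') (A (γ s) (p s))
  have hm : 0 < ⟪q, A (γ s) (p s)⟫ := calc
    0 < ⟪A (γ s) (p s), p s⟫ := hApos _ _ (hpne s hs')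
    _ ≤ ⟪A (γ s) (p s), q⟫ := inner_apply_self_le_of_isMinOn (convex_superdiffOn v Ω (γ s))
        (hAsymm (γ s)) (hpmem s hs') (hpmin s hs') hq
    _ = ⟪q, A (γ s) (p s)⟫ := real_inner_comm _ _
  obtain ⟨K, U, hU, hK⟩ := hlip (hmaps s hs')
  rw [nhdsWithin_eq_nhds.mpr (hΩo.mem_nhds (hmaps s hs'))] at hU
  filter_upwards [(tendsto_slope_comp_of_lipschitzOnWith hU hK (hderiv s hs') hray).eventually
    (eventually_gt_nhds hm), self_mem_nhdsWithin] with t ht (hst : s < t)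
  exact (slope_pos_iff_of_le hst.le).mp ht

/-- Along a generalized characteristic whose right derivative `ẋ⁺(s) = A(x(s))p(s)` selects
the minimal-energy element `p(s) ≠ 0` of `D⁺v(x(s))`, the value of `v` is strictly
increasing. -/
theorem strict_increase_along_characteristic {n : ℕ}
    (Ω : Set (EuclideanSpace ℝ (Fin n))) (hΩo : IsOpen Ω)
    (v : EuclideanSpace ℝ (Fin n) → ℝ) (C : ℝ)
    (hsc : ∀ z ∈ Ω, ∀ q ∈ superdiffOn v Ω z, ∀ y ∈ Ω,
      v y ≤ v z + ⟪q, y - z⟫ + C / 2 * ‖y - z‖ ^ 2)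
    (hdir : ∀ x₀ ∈ Ω, ∀ θ : EuclideanSpace ℝ (Fin n), ∃ m : ℝ,
      IsLeast {r : ℝ | ∃ p ∈ superdiffOn v Ω x₀, r = ⟪p, θ⟫} m ∧
      Tendsto (fun h : ℝ => (v (x₀ + h • θ) - v x₀) / h) (nhdsWithin 0 (Ioi 0)) (nhds m))
    (A : EuclideanSpace ℝ (Fin n) → EuclideanSpace ℝ (Fin n) →L[ℝ] EuclideanSpace ℝ (Fin n))
    (hAcont : Continuous A)
    (hAsymm : ∀ x p q, ⟪A x p, q⟫ = ⟪p, A x q⟫)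
    (hApos : ∀ x p, p ≠ 0 → 0 < ⟪A x p, p⟫)
    (τ : ℝ) (hτ : 0 < τ)
    (γ : ℝ → EuclideanSpace ℝ (Fin n)) (L : NNReal)
    (hLip : LipschitzOnWith L γ (Icc 0 τ)) (hmaps : ∀ s ∈ Icc 0 τ, γ s ∈ Ω)
    (p : ℝ → EuclideanSpace ℝ (Fin n))
    (hpmem : ∀ s ∈ Icc 0 τ, p s ∈ superdiffOn v Ω (γ s))
    (hpmin : ∀ s ∈ Icc 0 τ, ∀ q ∈ superdiffOn v Ω (γ s),
      ⟪A (γ s) (p s), p s⟫ ≤ ⟪A (γ s) q, q⟫)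
    (hderiv : ∀ s ∈ Icc 0 τ, HasDerivWithinAt γ (A (γ s) (p s)) (Ici s) s)
    (hpne : ∀ s ∈ Icc 0 τ, p s ≠ 0) :
    ∀ s₁ ∈ Icc 0 τ, ∀ s₂ ∈ Icc 0 τ, s₁ < s₂ → v (γ s₁) < v (γ s₂) :=
  strict_increase_along_characteristic_general Ω hΩo v C hsc hdir A hAsymm hApos τ γ L hLip hmaps p
    hpmem hpmin hderiv hpne
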